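/- With the same setup (q(θ) = Φ(x* - √M μ(θ/M)), μ' < 0, μ'' > 0), define b(θ) = -log(q(θ)/q(0)) + q'(θ)/q(θ). Then b is strictly decreasing on (0,∞). -/

import Mathlib

noncomputable def stdNormalPdf (x : ℝ) : ℝ :=
  (Real.sqrt (2 * Real.pi))⁻¹ * Real.exp (-x ^ 2 / 2)

noncomputable def stdNormalCdf (x : ℝ) : ℝ :=
  ∫ t in Set.Iic x, stdNormalPdf t

open Real Set MeasureTheory Filter

lemma pdf_pos (x : ℝ) : 0 < stdNormalPdf x := by
  unfold stdNormalPdf; positivity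

lemma pdf_cont : Continuous stdNormalPdf := by
  unfold stdNormalPdf; fun_prop

lemma pdf_integrable : Integrable stdNormalPdf := by
  have h : Integrable (fun x : ℝ => Real.exp (-(1/2) * x ^ 2)) :=
    integrable_exp_neg_mul_sq (by norm_num)
  have h2 := h.const_mul (Real.sqrt (2 * Real.pi))⁻¹
  refine h2.congr (Filter.Eventually.of_forall fun x => ?_)
  unfold stdNormalPdf; ring_nf

lemma hasDerivAt_pdf (x : ℝ) : HasDerivAt stdNormalPdf (-x * stdNormalPdf x) x := by
  unfold stdNormalPdf
  have h1 : HasDerivAt (fun x : ℝ => -x ^ 2 / 2) (-x) x := by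
    have := ((hasDerivAt_pow 2 x).neg).div_const 2
    refine this.congr_deriv ?_; push_cast; ring
  have := (h1.exp).const_mul (Real.sqrt (2 * Real.pi))⁻¹
  refine this.congr_deriv ?_; ring

lemma cdf_eq (x : ℝ) : stdNormalCdf x = stdNormalCdf 0 + ∫ t in (0:ℝ)..x, stdNormalPdf t := by
  have := intervalIntegral.integral_Iic_sub_Iic (μ := volume) (f := stdNormalPdf)
    (pdf_integrable.integrableOn) (pdf_integrable.integrableOn) (a := 0) (b := x)
  unfold stdNormalCdf
  linarith [this]

lemma hasDerivAt_cdf (x : ℝ) : HasDerivAt stdNormalCdf (stdNormalPdf x) x := by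
  have h : HasDerivAt (fun u => stdNormalCdf 0 + ∫ t in (0:ℝ)..u, stdNormalPdf t)
      (stdNormalPdf x) x := by
    refine HasDerivAt.const_add _ ?_
    exact intervalIntegral.integral_hasDerivAt_right
      pdf_integrable.intervalIntegrable
      (pdf_cont.aestronglyMeasurable.stronglyMeasurableAtFilter)
      pdf_cont.continuousAt
  exact h.congr_of_eventuallyEq (Filter.Eventually.of_forall fun y => cdf_eq y)

lemma cdf_pos (x : ℝ) : 0 < stdNormalCdf x := by
  unfold stdNormalCdf
  apply setIntegral_pos_iff_support_of_nonneg_ae ?_ ?_ |>.mpr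
  · simp only [Function.support, ne_eq]
    have : ∀ t, stdNormalPdf t ≠ 0 := fun t => (pdf_pos t).ne'
    simp only [this, not_false_iff, setOf_true, univ_inter]
    simp [Real.volume_Iic]
  · exact Filter.Eventually.of_forall fun t => (pdf_pos t).le
  · exact pdf_integrable.integrableOn

lemma neg_mul_pdf_integrable : Integrable (fun t : ℝ => -t * stdNormalPdf t) := by
  have h : Integrable (fun x : ℝ => x * Real.exp (-(1/2) * x ^ 2)) :=
    integrable_mul_exp_neg_mul_sq (by norm_num)
  have h2 := (h.const_mul (Real.sqrt (2 * Real.pi))⁻¹).neg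
  refine h2.congr (Filter.Eventually.of_forall fun x => ?_)
  simp only [Pi.neg_apply]
  unfold stdNormalPdf; ring_nf

lemma pdf_tendsto_atBot : Tendsto stdNormalPdf atBot (nhds 0) := by
  unfold stdNormalPdf
  rw [show (0:ℝ) = (Real.sqrt (2 * Real.pi))⁻¹ * 0 by ring]
  apply Tendsto.const_mul
  apply Real.tendsto_exp_atBot.comp
  have h0 : Tendsto (fun x : ℝ => x ^ 2) atBot atTop := by
    apply tendsto_atTop_mono' atBot ?_ tendsto_neg_atBot_atTop
    filter_upwards [eventually_le_atBot (-1:ℝ)] with x hx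
    nlinarith
  have h1 : Tendsto (fun x : ℝ => -(x ^ 2 / 2)) atBot atBot :=
    tendsto_neg_atTop_atBot.comp (h0.atTop_div_const (by norm_num : (0:ℝ) < 2))
  exact h1.congr (fun x => by ring)

lemma integral_neg_mul_pdf (x : ℝ) :
    ∫ t in Set.Iic x, -t * stdNormalPdf t = stdNormalPdf x := by
  have := integral_Iic_of_hasDerivAt_of_tendsto' (f := stdNormalPdf)
    (f' := fun t => -t * stdNormalPdf t) (a := x) (m := 0)
    (fun t _ => hasDerivAt_pdf t) (neg_mul_pdf_integrable.integrableOn) pdf_tendsto_atBot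
  simpa using this

lemma mills (x : ℝ) (hx : x < 0) : -x * stdNormalCdf x ≤ stdNormalPdf x := by
  have key : stdNormalCdf x ≤ (-x)⁻¹ * stdNormalPdf x := by
    rw [← integral_neg_mul_pdf x, ← integral_const_mul]
    unfold stdNormalCdf
    apply setIntegral_mono_on pdf_integrable.integrableOn
      ((neg_mul_pdf_integrable.integrableOn).const_mul _) measurableSet_Iic
    intro t ht
    simp only [Set.mem_Iic] at ht
    have h1 : (1:ℝ) ≤ (-x)⁻¹ * -t := by
      rw [← div_eq_inv_mul, le_div_iff₀ (by linarith)]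
      linarith
    calc stdNormalPdf t = 1 * stdNormalPdf t := (one_mul _).symm
      _ ≤ ((-x)⁻¹ * -t) * stdNormalPdf t :=
        mul_le_mul_of_nonneg_right h1 (pdf_pos t).le
      _ = (-x)⁻¹ * (-t * stdNormalPdf t) := by ring
  calc -x * stdNormalCdf x ≤ -x * ((-x)⁻¹ * stdNormalPdf x) :=
        mul_le_mul_of_nonneg_left key (by linarith)
    _ = stdNormalPdf x := by
        rw [← mul_assoc, mul_inv_cancel₀ (by linarith : (-x:ℝ) ≠ 0), one_mul]

lemma h_nonneg (x : ℝ) : 0 ≤ stdNormalPdf x + x * stdNormalCdf x := by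
  rcases le_or_gt 0 x with h | h
  · have := (pdf_pos x).le
    have := (cdf_pos x).le
    nlinarith
  · have := mills x h
    nlinarith

lemma h_strictMono : StrictMono (fun x => stdNormalPdf x + x * stdNormalCdf x) := by
  have hd : ∀ x : ℝ, HasDerivAt (fun x => stdNormalPdf x + x * stdNormalCdf x)
      (stdNormalCdf x) x := by
    intro x
    have h1 := (hasDerivAt_pdf x).add (((hasDerivAt_id x).mul (hasDerivAt_cdf x)))
    refine h1.congr_deriv ?_
    simp only [id_eq]
    ring
  exact strictMonoOn_univ.mp <| strictMonoOn_of_hasDerivWithinAt_pos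
    (convex_univ)
    (fun x _ => ((hd x).continuousAt).continuousWithinAt)
    (fun x _ => ((hd x).hasDerivWithinAt))
    (fun x _ => cdf_pos x)

lemma h_pos (x : ℝ) : 0 < stdNormalPdf x + x * stdNormalCdf x :=
  lt_of_le_of_lt (h_nonneg (x - 1)) (h_strictMono (show x - 1 < x by linarith))

lemma cdf_strictMono : StrictMono stdNormalCdf := by
  exact strictMonoOn_univ.mp <| strictMonoOn_of_hasDerivWithinAt_pos
    (convex_univ)
    (fun x _ => ((hasDerivAt_cdf x).continuousAt).continuousWithinAt)
    (fun x _ => ((hasDerivAt_cdf x).hasDerivWithinAt))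
    (fun x _ => pdf_pos x)

lemma ratio_strictAnti : StrictAnti (fun x => stdNormalPdf x / stdNormalCdf x) := by
  have hd : ∀ x : ℝ, HasDerivAt (fun x => stdNormalPdf x / stdNormalCdf x)
      (-(stdNormalPdf x * (stdNormalPdf x + x * stdNormalCdf x)) / (stdNormalCdf x)^2) x := by
    intro x
    have h1 := (hasDerivAt_pdf x).div (hasDerivAt_cdf x) (cdf_pos x).ne'
    refine h1.congr_deriv ?_
    field_simp
    ring
  have : ∀ x : ℝ, -(stdNormalPdf x * (stdNormalPdf x + x * stdNormalCdf x)) / (stdNormalCdf x)^2 < 0 := by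
    intro x
    apply div_neg_of_neg_of_pos
    · have := pdf_pos x; have := h_pos x; nlinarith
    · exact pow_pos (cdf_pos x) 2
  exact strictAntiOn_univ.mp <| strictAntiOn_of_hasDerivWithinAt_neg
    (convex_univ)
    (fun x _ => ((hd x).continuousAt).continuousWithinAt)
    (fun x _ => ((hd x).hasDerivWithinAt))
    (fun x _ => this x)

/-- For L(θ) = a e^{-θ}, the critical point equation function
b(θ) = -log(q(θ)/q(0)) + q'(θ)/q(θ) is strictly decreasing on (0,∞). -/
theorem stmt_12 (μ : ℝ → ℝ) (hμ : ContDiff ℝ 2 μ)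
    (hμ' : ∀ s, deriv μ s < 0) (hμ'' : ∀ s, deriv (deriv μ) s > 0)
    (xstar : ℝ) (M : ℕ) (hM : 1 ≤ M)
    (q : ℝ → ℝ) (hq : ∀ t, q t = stdNormalCdf (xstar - Real.sqrt M * μ (t / M)))
    (b : ℝ → ℝ)
    (hb : ∀ t, b t = -Real.log (q t / q 0) + deriv q t / q t) :
    StrictAntiOn b (Set.Ioi 0) := by
  have hM0 : (0:ℝ) < (M:ℝ) := by exact_mod_cast hM
  have hsM : (0:ℝ) < Real.sqrt M := Real.sqrt_pos.mpr hM0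
  set g : ℝ → ℝ := fun t => xstar - Real.sqrt M * μ (t / M) with hgdef
  set D : ℝ → ℝ := fun t => -(Real.sqrt M * (deriv μ (t / M) * (1 / (M:ℝ)))) with hDdef
  have hμdiff : Differentiable ℝ μ := hμ.differentiable (by norm_num)
  have hg : ∀ t, HasDerivAt g (D t) t := by
    intro t
    have h1 : HasDerivAt (fun t : ℝ => t / (M:ℝ)) (1 / (M:ℝ)) t := by
      simpa using (hasDerivAt_id t).div_const (M:ℝ)
    have h2 : HasDerivAt (fun t : ℝ => μ (t / M)) (deriv μ (t / M) * (1 / (M:ℝ))) t :=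
      ((hμdiff (t / M)).hasDerivAt).comp t h1
    simpa [hDdef] using (h2.const_mul (Real.sqrt M)).const_sub xstar
  have hqfun : q = fun t => stdNormalCdf (g t) := funext hq
  have hqD : ∀ t, HasDerivAt q (stdNormalPdf (g t) * D t) t := by
    intro t
    rw [hqfun]
    exact (hasDerivAt_cdf (g t)).comp t (hg t)
  have hqpos : ∀ t, 0 < q t := fun t => by rw [hq t]; exact cdf_pos _
  have hDpos : ∀ t, 0 < D t := by
    intro t
    have := hμ' (t / M)
    have h1 : Real.sqrt M * (deriv μ (t / M) * (1 / (M:ℝ))) < 0 := by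
      apply mul_neg_of_pos_of_neg hsM
      apply mul_neg_of_neg_of_pos this
      positivity
    simpa [hDdef] using neg_pos.mpr h1
  have hbt : ∀ t, b t = Real.log (q 0) - Real.log (q t)
      + (stdNormalPdf (g t) / stdNormalCdf (g t)) * D t := by
    intro t
    rw [hb t, Real.log_div (hqpos t).ne' (hqpos 0).ne', (hqD t).deriv]
    rw [hqfun]
    field_simp
    ring
  -- monotonicity ingredients
  have hμanti : StrictAnti μ := strictAnti_of_deriv_neg hμ'
  have hμ'mono : StrictMono (deriv μ) := strictMono_of_deriv_pos hμ''
  intro x _ y _ hxy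
  have hdiv : x / (M:ℝ) < y / (M:ℝ) := by gcongr
  have hgx : g x < g y := by
    have h := hμanti hdiv
    have h2 := mul_lt_mul_of_pos_left h hsM
    simp only [hgdef]
    linarith
  have hlog : Real.log (q x) < Real.log (q y) := by
    rw [hq x, hq y]
    exact Real.log_lt_log (cdf_pos _) (cdf_strictMono hgx)
  have hr : stdNormalPdf (g y) / stdNormalCdf (g y)
      < stdNormalPdf (g x) / stdNormalCdf (g x) := ratio_strictAnti hgx
  have hD : D y < D x := by
    have h := hμ'mono hdiv
    have h2 : deriv μ (x / M) * (1 / (M:ℝ)) < deriv μ (y / M) * (1 / (M:ℝ)) :=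
      mul_lt_mul_of_pos_right h (by positivity)
    have h3 := mul_lt_mul_of_pos_left h2 hsM
    simp only [hDdef]
    linarith
  have hprod : stdNormalPdf (g y) / stdNormalCdf (g y) * D y
      < stdNormalPdf (g x) / stdNormalCdf (g x) * D x :=
    mul_lt_mul'' hr hD (div_pos (pdf_pos _) (cdf_pos _)).le (hDpos y).le
  rw [hbt x, hbt y]
  linarith
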